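/- Let k be a field of characteristic zero and let p, q ∈ k[t] be coprime polynomials with deg(q) > 0. Then gcd(p'q − pq', q²) = gcd(q, q') (up to units). -/

import Mathlib

/-!
In characteristic zero, a prime `r` dividing `q` occurs in `q'` with multiplicity exactly one
less than in `q`. If moreover `r ∤ p`, then `p'q - pq'` has the same `r`-adic valuation as `pq'`,
i.e. as `q'`, which is also the valuation of `gcd(q, q')`. Primes not dividing `q` do not divide
`gcd(p'q - pq', q²)` at all, and `gcd(q, q')` obviously divides it.
-/

open Polynomial

namespace Polynomial

variable {k : Type*} [Field k] [CharZero k]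

theorem pow_succ_dvd_of_pow_dvd_of_pow_dvd_derivative {r f : k[X]} (hr : Prime r) {n : ℕ}
    (hn : n ≠ 0) (hf : r ^ n ∣ f) (hf' : r ^ n ∣ derivative f) : r ^ (n + 1) ∣ f := by
  obtain ⟨m, rfl⟩ := Nat.exists_eq_succ_of_ne_zero hn
  obtain ⟨s, rfl⟩ := hf
  rw [derivative_mul, derivative_pow_succ, dvd_add_left (dvd_mul_right _ _),
    show C ((m : k) + 1) * r ^ m * derivative r * s = r ^ m * (C ((m : k) + 1) * derivative r * s)
      by ring, pow_succ, mul_dvd_mul_iff_left (pow_ne_zero _ hr.ne_zero)] at hf'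
  have hC : IsUnit (C ((m : k) + 1)) :=
    isUnit_C.mpr (isUnit_iff_ne_zero.mpr (Nat.cast_add_one_ne_zero m))
  rcases hr.dvd_or_dvd hf' with h | h
  · rcases hr.dvd_or_dvd h with h | h
    · exact absurd (isUnit_of_dvd_unit h hC) hr.not_isUnit
    · exact absurd ((dvd_derivative_iff.trans derivative_eq_zero).mp h)
        hr.irreducible.natDegree_pos.ne'
  · exact pow_succ r (m + 1) ▸ mul_dvd_mul_left _ h

theorem pow_succ_dvd_of_dvd_of_pow_dvd_derivative {r f : k[X]} (hr : Prime r) (hf : r ∣ f)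
    {n : ℕ} (hf' : r ^ n ∣ derivative f) : r ^ (n + 1) ∣ f := by
  induction n with
  | zero => simpa using hf
  | succ n ih =>
    exact pow_succ_dvd_of_pow_dvd_of_pow_dvd_derivative hr n.succ_ne_zero
      (ih ((pow_dvd_pow r n.le_succ).trans hf')) hf'

theorem pow_dvd_derivative_of_pow_dvd_wronskian {r p q : k[X]} (hr : Prime r)
    (hrp : IsCoprime r p) (hrq : r ∣ q) {n : ℕ} (hW : r ^ n ∣ wronskian q p) :
    r ^ n ∣ derivative q := by
  induction n with
  | zero => exact one_dvd _
  | succ n ih =>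
    have hq : r ^ (n + 1) ∣ q :=
      pow_succ_dvd_of_dvd_of_pow_dvd_derivative hr hrq (ih ((pow_dvd_pow r n.le_succ).trans hW))
    -- modulo `r ^ (n + 1) ∣ q`, the Wronskian `q p' - q' p` reduces to `-p q'`
    have hpq' : r ^ (n + 1) ∣ p * derivative q := by
      simpa [wronskian, mul_comm] using dvd_sub (hq.mul_right (derivative p)) hW
    exact hrp.pow_left.dvd_of_dvd_mul_left hpq'

end Polynomial

theorem stmt_2_general {k : Type*} [Field k] [CharZero k]
    (p q : Polynomial k) (hcop : IsCoprime p q) :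
    letI : DecidableEq (Polynomial k) := Classical.decEq _
    Associated
      (EuclideanDomain.gcd (Polynomial.derivative p * q - p * Polynomial.derivative q) (q ^ 2))
      (EuclideanDomain.gcd q (Polynomial.derivative q)) := by
  let _ : DecidableEq k[X] := Classical.decEq _
  rw [show derivative p * q - p * derivative q = wronskian q p by rw [wronskian]; ring]
  rcases eq_or_ne q 0 with rfl | hq
  · simp
  have hg : EuclideanDomain.gcd (wronskian q p) (q ^ 2) ≠ 0 := fun h =>
    hq (pow_eq_zero_iff two_ne_zero |>.mp (EuclideanDomain.gcd_eq_zero_iff.mp h).2)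
  refine associated_of_dvd_dvd ?_ ?_
  · rw [UniqueFactorizationMonoid.dvd_iff_emultiplicity_le hg]
    refine fun r hr => emultiplicity_le_emultiplicity_iff.mpr fun n hrg => ?_
    rcases n with _ | n
    · exact one_dvd _
    have hrq : r ∣ q := hr.dvd_of_dvd_pow <|
      (dvd_pow_self r n.succ_ne_zero).trans (hrg.trans (EuclideanDomain.gcd_dvd_right _ _))
    have hq' := pow_dvd_derivative_of_pow_dvd_wronskian hr
      (hcop.of_isCoprime_of_dvd_right hrq).symm hrq (hrg.trans (EuclideanDomain.gcd_dvd_left _ _))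
    exact EuclideanDomain.dvd_gcd ((pow_dvd_pow r n.succ.le_succ).trans
      (pow_succ_dvd_of_dvd_of_pow_dvd_derivative hr hrq hq')) hq'
  · exact EuclideanDomain.dvd_gcd
      (dvd_sub ((EuclideanDomain.gcd_dvd_left _ _).mul_right _)
        ((EuclideanDomain.gcd_dvd_right _ _).mul_right _))
      ((EuclideanDomain.gcd_dvd_left _ _).trans (dvd_pow_self q two_ne_zero))

theorem stmt_2 {k : Type*} [Field k] [CharZero k]
    (p q : Polynomial k) (hcop : IsCoprime p q) (hq : 0 < q.natDegree) :
    letI : DecidableEq (Polynomial k) := Classical.decEq _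
    Associated
      (EuclideanDomain.gcd (Polynomial.derivative p * q - p * Polynomial.derivative q) (q ^ 2))
      (EuclideanDomain.gcd q (Polynomial.derivative q)) :=
  stmt_2_general p q hcop
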